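/- arXiv:1807.10883 — 6 statements merged into one kernel-verified Lean document; each statement's English description precedes it below -/
import Mathlib

section
/- A (k+1)-dimensional linear subspace B of ℝ^{n+1} lies in the image of the embedding j : Graff(k,n) → Gr(k+1,n+1) if and only if B is not contained in the coordinate hyperplane E_n = span{e_1,...,e_n}. Consequently Gr(k+1,n+1) is the disjoint union of j(Graff(k,n)) and a subset isomorphic to Gr(k+1,n). -/
open Module

/-- `j(A + b) = span(A ∪ {b + e_{n+1}})`, with `ℝⁿ` embedded in `ℝⁿ⁺¹` as the first
`n` coordinates. -/
noncomputable def graffEmbed {n : ℕ} (s : AffineSubspace ℝ (Fin n → ℝ)) :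
    Submodule ℝ (Fin (n + 1) → ℝ) :=
  Submodule.span ℝ
    ((fun x : Fin n → ℝ => Fin.snoc x (0 : ℝ) + Pi.single (Fin.last n) (1 : ℝ)) '' s)

/-- The coordinate hyperplane `E_n = span{e_1, …, e_n} ⊆ ℝⁿ⁺¹`: vectors whose last
coordinate vanishes. -/
noncomputable def coordHyperplane (n : ℕ) : Submodule ℝ (Fin (n + 1) → ℝ) :=
  LinearMap.ker (LinearMap.proj (R := ℝ) (φ := fun _ : Fin (n + 1) => ℝ) (Fin.last n))

/-! If `B ⊄ E_n`, then `B` contains a vector `w = (b, 1)`, and since `E_n` is a hyperplane,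
`B = (B ⊓ E_n) ⊔ ℝ ∙ w`. Pulling `B ⊓ E_n` back to `ℝⁿ` gives a `k`-dimensional direction `A`
with `j(b + A) = B`. Conversely every `j(s)` contains some `(p, 1)`. Subspaces inside `E_n` are
exactly the images of subspaces of `ℝⁿ` under the injection `x ↦ (x, 0)`. -/

namespace Submodule

theorem span_eq_direction_sup_span_singleton {K V : Type*} [Ring K] [AddCommGroup V] [Module K V]
    (s : AffineSubspace K V) {p : V} (hp : p ∈ s) : span K (s : Set V) = s.direction ⊔ K ∙ p := by
  apply le_antisymm
  · rw [span_le]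
    intro x hx
    rw [← sub_add_cancel x p]
    exact add_mem_sup (s.vsub_mem_direction hx hp) (mem_span_singleton_self p)
  · refine sup_le (fun v hv => ?_) (span_le.mpr (Set.singleton_subset_iff.mpr (subset_span hp)))
    rw [← add_sub_cancel_right v p]
    exact sub_mem (subset_span (s.vadd_mem_of_mem_direction hv hp)) (subset_span hp)

variable {K V : Type*} [Field K] [AddCommGroup V] [Module K V]

theorem inf_ker_sup_span_singleton_eq (f : V →ₗ[K] K) {B : Submodule K V} {w : V} (hw : w ∈ B)
    (hfw : f w ≠ 0) : B ⊓ LinearMap.ker f ⊔ K ∙ w = B := by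
  rw [inf_sup_assoc_of_le _ ((span_singleton_le_iff_mem w B).mpr hw), sup_comm,
    f.span_singleton_sup_ker_eq_top hfw, inf_top_eq]

theorem finrank_inf_ker_add_one (f : V →ₗ[K] K) {B : Submodule K V} [FiniteDimensional K B]
    {w : V} (hw : w ∈ B) (hfw : f w ≠ 0) :
    finrank K ↥(B ⊓ LinearMap.ker f) + 1 = finrank K B := by
  have hw0 : w ≠ 0 := fun h => hfw (h ▸ map_zero f)
  have hdisj : B ⊓ LinearMap.ker f ⊓ K ∙ w = ⊥ :=
    ((disjoint_span_singleton' hw0).mpr fun h => hfw (mem_inf.mp h).2).eq_bot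
  have := finrank_sup_add_finrank_inf_eq (B ⊓ LinearMap.ker f) (K ∙ w)
  rwa [inf_ker_sup_span_singleton_eq f hw hfw, hdisj, finrank_bot, add_zero,
    finrank_span_singleton hw0, eq_comm] at this

end Submodule

namespace LinearMap

theorem finrank_map_of_injective {R M N : Type*} [Ring R] [AddCommGroup M] [Module R M]
    [AddCommGroup N] [Module R N] {f : M →ₗ[R] N} (hf : Function.Injective f) (p : Submodule R M) :
    finrank R (p.map f) = finrank R p :=
  (Submodule.equivMapOfInjective f hf p).finrank_eq.symm

variable {K V W : Type*} [Field K] [AddCommGroup V] [Module K V] [AddCommGroup W] [Module K W]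

def finrankSubmoduleLeRangeEquiv {f : V →ₗ[K] W} (hf : Function.Injective f) (d : ℕ) :
    {B : Submodule K W // finrank K B = d ∧ B ≤ range f} ≃
      {C : Submodule K V // finrank K C = d} where
  toFun B := ⟨B.1.comap f, by
    rw [← finrank_map_of_injective hf, Submodule.map_comap_eq_of_le B.2.2, B.2.1]⟩
  invFun C := ⟨C.1.map f, by rw [finrank_map_of_injective hf, C.2], map_le_range⟩
  left_inv B := Subtype.ext (Submodule.map_comap_eq_of_le B.2.2)
  right_inv C := Subtype.ext (Submodule.comap_map_eq_of_injective hf C.1)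

end LinearMap

open Submodule

noncomputable def snocZero (n : ℕ) : (Fin n → ℝ) →ₗ[ℝ] (Fin (n + 1) → ℝ) where
  toFun x := Fin.snoc x 0
  map_add' x y := by
    ext i
    induction i using Fin.lastCases <;> simp
  map_smul' c x := by
    ext i
    induction i using Fin.lastCases <;> simp

@[simp]
theorem snocZero_apply {n : ℕ} (x : Fin n → ℝ) : snocZero n x = Fin.snoc x 0 := rfl

theorem snocZero_injective (n : ℕ) : Function.Injective (snocZero n) := fun x y h => by
  ext i
  simpa using congrFun h i.castSucc

theorem range_snocZero (n : ℕ) : LinearMap.range (snocZero n) = coordHyperplane n := by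
  ext z
  refine ⟨?_, fun hz => ⟨Fin.init z, ?_⟩⟩
  · rintro ⟨x, rfl⟩
    simp [coordHyperplane]
  · rw [snocZero_apply, ← show z (Fin.last n) = 0 from hz, Fin.snoc_init_self]

/-- `x ↦ (x, 1)`; `graffEmbed s` is the span of the image of `s`. -/
noncomputable def graffAffine (n : ℕ) : (Fin n → ℝ) →ᵃ[ℝ] (Fin (n + 1) → ℝ) where
  toFun x := Fin.snoc x 0 + Pi.single (Fin.last n) 1
  linear := snocZero n
  map_vadd' x v := by
    rw [vadd_eq_add, vadd_eq_add, ← snocZero_apply, ← snocZero_apply, map_add, add_assoc]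

theorem graffAffine_linear (n : ℕ) : (graffAffine n).linear = snocZero n := rfl

theorem graffAffine_apply_last {n : ℕ} (x : Fin n → ℝ) : graffAffine n x (Fin.last n) = 1 := by
  simp [graffAffine]

theorem graffAffine_init {n : ℕ} {z : Fin (n + 1) → ℝ} (hz : z (Fin.last n) = 1) :
    graffAffine n (Fin.init z) = z := by
  ext i
  induction i using Fin.lastCases with
  | last => simp [graffAffine, hz]
  | cast j => simp [graffAffine, Fin.init]

theorem graffEmbed_eq_map_direction_sup {n : ℕ} {s : AffineSubspace ℝ (Fin n → ℝ)}
    {p : Fin n → ℝ} (hp : p ∈ s) :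
    graffEmbed s = s.direction.map (snocZero n) ⊔ ℝ ∙ graffAffine n p := by
  change span ℝ (graffAffine n '' s) = _
  rw [← AffineSubspace.coe_map,
    span_eq_direction_sup_span_singleton _ (AffineSubspace.mem_map_of_mem _ hp),
    AffineSubspace.map_direction, graffAffine_linear]

theorem graffEmbed_not_le_coordHyperplane {n : ℕ} {s : AffineSubspace ℝ (Fin n → ℝ)}
    (hs : (s : Set (Fin n → ℝ)).Nonempty) : ¬ graffEmbed s ≤ coordHyperplane n := by
  obtain ⟨p, hp⟩ := hs
  intro hle
  have : graffAffine n p (Fin.last n) = 0 :=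
    hle (subset_span (Set.mem_image_of_mem _ hp))
  simp [graffAffine_apply_last] at this

theorem exists_graffEmbed_eq {n : ℕ} {B : Submodule ℝ (Fin (n + 1) → ℝ)}
    (hB : ¬ B ≤ coordHyperplane n) :
    ∃ s : AffineSubspace ℝ (Fin n → ℝ), (s : Set (Fin n → ℝ)).Nonempty ∧
      finrank ℝ s.direction + 1 = finrank ℝ B ∧ graffEmbed s = B := by
  obtain ⟨v, hvB, hv⟩ := SetLike.not_le_iff_exists.mp hB
  replace hv : v (Fin.last n) ≠ 0 := hv
  set w := (v (Fin.last n))⁻¹ • v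
  have hwB : w ∈ B := B.smul_mem _ hvB
  have hw : w (Fin.last n) = 1 := by simp [w, inv_mul_cancel₀ hv]
  have hmap : (B.comap (snocZero n)).map (snocZero n) = B ⊓ coordHyperplane n := by
    rw [map_comap_eq, range_snocZero, inf_comm]
  refine ⟨AffineSubspace.mk' (Fin.init w) (B.comap (snocZero n)),
    ⟨_, AffineSubspace.self_mem_mk' _ _⟩, ?_, ?_⟩
  · rw [AffineSubspace.direction_mk', ← LinearMap.finrank_map_of_injective (snocZero_injective n),
      hmap]
    exact finrank_inf_ker_add_one _ hwB (by simp [hw])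
  · rw [graffEmbed_eq_map_direction_sup (AffineSubspace.self_mem_mk' _ _),
      AffineSubspace.direction_mk', hmap, graffAffine_init hw]
    exact inf_ker_sup_span_singleton_eq _ hwB (by simp [hw])

theorem graffEmbed_image_general (k n : ℕ) :
    (∀ B : Submodule ℝ (Fin (n + 1) → ℝ), finrank ℝ B = k + 1 →
      ((∃ s : AffineSubspace ℝ (Fin n → ℝ), (s : Set (Fin n → ℝ)).Nonempty ∧
          finrank ℝ s.direction = k ∧ graffEmbed s = B) ↔ ¬ B ≤ coordHyperplane n)) ∧
    Nonempty ({B : Submodule ℝ (Fin (n + 1) → ℝ) //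
                finrank ℝ B = k + 1 ∧ B ≤ coordHyperplane n} ≃
              {C : Submodule ℝ (Fin n → ℝ) // finrank ℝ C = k + 1}) := by
  refine ⟨fun B hB => ⟨?_, fun hle => ?_⟩, ?_⟩
  · rintro ⟨s, hs, -, rfl⟩
    exact graffEmbed_not_le_coordHyperplane hs
  · obtain ⟨s, hs, hdim, rfl⟩ := exists_graffEmbed_eq hle
    exact ⟨s, hs, by omega, rfl⟩
  · rw [← range_snocZero]
    exact ⟨LinearMap.finrankSubmoduleLeRangeEquiv (snocZero_injective n) (k + 1)⟩

/-- A `(k+1)`-dimensional linear subspace `B` of `ℝⁿ⁺¹` lies in the image of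
`j : Graff(k,n) → Gr(k+1,n+1)` iff `B` is not contained in `E_n = span{e_1,…,e_n}`;
consequently `Gr(k+1,n+1)` is the disjoint union of `j(Graff(k,n))` and a subset
isomorphic to `Gr(k+1,n)`. -/
theorem graffEmbed_image (k n : ℕ) (hkn : k < n) :
    (∀ B : Submodule ℝ (Fin (n + 1) → ℝ), finrank ℝ B = k + 1 →
      ((∃ s : AffineSubspace ℝ (Fin n → ℝ), (s : Set (Fin n → ℝ)).Nonempty ∧
          finrank ℝ s.direction = k ∧ graffEmbed s = B) ↔ ¬ B ≤ coordHyperplane n)) ∧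
    Nonempty ({B : Submodule ℝ (Fin (n + 1) → ℝ) //
                finrank ℝ B = k + 1 ∧ B ≤ coordHyperplane n} ≃
              {C : Submodule ℝ (Fin n → ℝ) // finrank ℝ C = k + 1}) :=
  graffEmbed_image_general k n
end

section
/- The image of the embedding j : Graff(k,n) → Gr(k+1,n+1) is open and dense in Gr(k+1,n+1) (in the manifold topology). -/
open Module

/-- The Grassmannian `Gr(k,n)` in its projection-matrix model: symmetric idempotent
`n × n` real matrices of trace `k` (orthogonal projections onto `k`-dimensional
subspaces of `ℝⁿ`). -/
def GrMat (k n : ℕ) : Type :=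
  {P : Matrix (Fin n) (Fin n) ℝ // P.transpose = P ∧ P * P = P ∧ P.trace = (k : ℝ)}

instance (k n : ℕ) : TopologicalSpace (GrMat k n) :=
  inferInstanceAs (TopologicalSpace
    {P : Matrix (Fin n) (Fin n) ℝ // P.transpose = P ∧ P * P = P ∧ P.trace = (k : ℝ)})

/-! The image of `j` consists of the projections with nonzero last row, an open condition.
If the last row of a projection `P` vanishes, `e := e_{n+1}` is orthogonal to its range; for a unit
vector `u` of that range, rotating `u` towards `e` gives the projections
`P - u uᵀ + w_t w_tᵀ` with `w_t = cos t • u + sin t • e`. They have the rank of `P`, tend to `P`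
as `t → 0`, and their last row is nonzero for `0 < t < π` because they fix `w_t`. -/

open Matrix Real Set

namespace Matrix

section VecMulVec

variable {ι R : Type*} [CommRing R]

lemma isSymm_vecMulVec_self (v : ι → R) : (vecMulVec v v).IsSymm :=
  transpose_vecMulVec v v

variable [Fintype ι]

lemma range_mulVecLin_le_ker_proj_iff {m : Type*} [DecidableEq ι] (A : Matrix m ι R) (i : m) :
    LinearMap.range A.mulVecLin ≤ LinearMap.ker (LinearMap.proj i) ↔ A i = 0 := by
  rw [LinearMap.range_le_ker_iff, ← dotProduct_eq_zero_iff, LinearMap.ext_iff]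
  rfl

lemma isIdempotentElem_vecMulVec_self {v : ι → R} (hv : v ⬝ᵥ v = 1) :
    IsIdempotentElem (vecMulVec v v) := by
  rw [IsIdempotentElem, vecMulVec_mul_vecMulVec, hv, one_smul]

lemma mul_vecMulVec_self_eq_zero {Q : Matrix ι ι R} {w : ι → R} (hw : Q *ᵥ w = 0) :
    Q * vecMulVec w w = 0 := by
  rw [mul_vecMulVec, hw, zero_vecMulVec]

lemma vecMulVec_self_mul_eq_zero {Q : Matrix ι ι R} {w : ι → R} (hQ : Q.IsSymm)
    (hw : Q *ᵥ w = 0) : vecMulVec w w * Q = 0 := by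
  rw [vecMulVec_mul, ← hQ.eq, vecMul_transpose, hw, vecMulVec_zero]

lemma IsIdempotentElem.add_vecMulVec_self {Q : Matrix ι ι R} {w : ι → R}
    (hQ : IsIdempotentElem Q) (hQs : Q.IsSymm) (hQw : Q *ᵥ w = 0) (hw : w ⬝ᵥ w = 1) :
    IsIdempotentElem (Q + vecMulVec w w) := by
  rw [IsIdempotentElem, add_mul, mul_add, mul_add, hQ.eq, mul_vecMulVec_self_eq_zero hQw,
    vecMulVec_self_mul_eq_zero hQs hQw, (isIdempotentElem_vecMulVec_self hw).eq, add_zero,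
    zero_add]

lemma IsIdempotentElem.sub_vecMulVec_self {P : Matrix ι ι R} {u : ι → R}
    (hP : IsIdempotentElem P) (hPs : P.IsSymm) (hPu : P *ᵥ u = u) (hu : u ⬝ᵥ u = 1) :
    IsIdempotentElem (P - vecMulVec u u) := by
  have hPU : P * vecMulVec u u = vecMulVec u u := by rw [mul_vecMulVec, hPu]
  have hUP : vecMulVec u u * P = vecMulVec u u := by
    rw [vecMulVec_mul, ← hPs.eq, vecMul_transpose, hPu]
  rw [IsIdempotentElem, sub_mul, mul_sub, mul_sub, hP.eq, hPU, hUP,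
    (isIdempotentElem_vecMulVec_self hu).eq]
  abel

lemma sub_vecMulVec_self_mulVec_self {P : Matrix ι ι R} {u : ι → R} (hPu : P *ᵥ u = u)
    (hu : u ⬝ᵥ u = 1) : (P - vecMulVec u u) *ᵥ u = 0 := by
  rw [sub_mulVec, vecMulVec_mulVec, hu, MulOpposite.op_one, one_smul, hPu, sub_self]

end VecMulVec

lemma exists_mulVec_eq_self_and_dotProduct_self_eq_one {ι : Type*} [Fintype ι] {P : Matrix ι ι ℝ}
    (hP : IsIdempotentElem P) (h0 : P ≠ 0) : ∃ u, P *ᵥ u = u ∧ u ⬝ᵥ u = 1 := by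
  obtain ⟨v, hv⟩ : ∃ v, P *ᵥ v ≠ 0 := by
    by_contra! h
    exact h0 (ext_iff_mulVec.mpr fun v => by rw [h, zero_mulVec])
  set x := P *ᵥ v
  have hxx : 0 < x ⬝ᵥ x :=
    lt_of_le_of_ne (Finset.sum_nonneg fun i _ => mul_self_nonneg (x i))
      (Ne.symm (dotProduct_self_eq_zero.not.mpr hv))
  refine ⟨(√(x ⬝ᵥ x))⁻¹ • x, ?_, ?_⟩
  · rw [mulVec_smul, mulVec_mulVec, hP.eq]
  · rw [smul_dotProduct, dotProduct_smul, smul_eq_mul, smul_eq_mul, ← mul_assoc,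
      ← mul_inv, mul_self_sqrt hxx.le, inv_mul_cancel₀ hxx.ne']

section Rotation

variable {ι : Type*} {P : Matrix ι ι ℝ} {u e : ι → ℝ}

noncomputable def rotateProj (P : Matrix ι ι ℝ) (u e : ι → ℝ) (t : ℝ) : Matrix ι ι ℝ :=
  P - vecMulVec u u + vecMulVec (cos t • u + sin t • e) (cos t • u + sin t • e)

@[simp]
lemma rotateProj_zero : rotateProj P u e 0 = P := by
  simp [rotateProj]

@[fun_prop]
lemma continuous_rotateProj : Continuous (rotateProj P u e) := by
  unfold rotateProj
  fun_prop

lemma isSymm_rotateProj (hPs : P.IsSymm) (t : ℝ) : (rotateProj P u e t).IsSymm :=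
  (hPs.sub (isSymm_vecMulVec_self u)).add (isSymm_vecMulVec_self _)

variable [Fintype ι]

lemma dotProduct_self_cos_smul_add_sin_smul (hu : u ⬝ᵥ u = 1) (he : e ⬝ᵥ e = 1)
    (hue : u ⬝ᵥ e = 0) (t : ℝ) : (cos t • u + sin t • e) ⬝ᵥ (cos t • u + sin t • e) = 1 := by
  simp only [add_dotProduct, dotProduct_add, smul_dotProduct, dotProduct_smul, smul_eq_mul,
    dotProduct_comm e u, hu, he, hue]
  linear_combination cos_sq_add_sin_sq t

lemma trace_rotateProj (hu : u ⬝ᵥ u = 1) (he : e ⬝ᵥ e = 1) (hue : u ⬝ᵥ e = 0) (t : ℝ) :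
    (rotateProj P u e t).trace = P.trace := by
  rw [rotateProj, trace_add, trace_sub, trace_vecMulVec, trace_vecMulVec, hu,
    dotProduct_self_cos_smul_add_sin_smul hu he hue, sub_add_cancel]

lemma sub_vecMulVec_self_mulVec_cos_smul_add_sin_smul (hPu : P *ᵥ u = u) (hPe : P *ᵥ e = 0)
    (hu : u ⬝ᵥ u = 1) (hue : u ⬝ᵥ e = 0) (t : ℝ) :
    (P - vecMulVec u u) *ᵥ (cos t • u + sin t • e) = 0 := by
  have hQe : (P - vecMulVec u u) *ᵥ e = 0 := by
    rw [sub_mulVec, vecMulVec_mulVec, hue, hPe, MulOpposite.op_zero, zero_smul, sub_zero]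
  rw [mulVec_add, mulVec_smul, mulVec_smul, sub_vecMulVec_self_mulVec_self hPu hu, hQe,
    smul_zero, smul_zero, add_zero]

lemma isIdempotentElem_rotateProj (hP : IsIdempotentElem P) (hPs : P.IsSymm)
    (hPu : P *ᵥ u = u) (hPe : P *ᵥ e = 0) (hu : u ⬝ᵥ u = 1) (he : e ⬝ᵥ e = 1)
    (hue : u ⬝ᵥ e = 0) (t : ℝ) : IsIdempotentElem (rotateProj P u e t) :=
  (hP.sub_vecMulVec_self hPs hPu hu).add_vecMulVec_self (hPs.sub (isSymm_vecMulVec_self u))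
    (sub_vecMulVec_self_mulVec_cos_smul_add_sin_smul hPu hPe hu hue t)
    (dotProduct_self_cos_smul_add_sin_smul hu he hue t)

lemma rotateProj_mulVec (hPu : P *ᵥ u = u) (hPe : P *ᵥ e = 0) (hu : u ⬝ᵥ u = 1)
    (he : e ⬝ᵥ e = 1) (hue : u ⬝ᵥ e = 0) (t : ℝ) :
    rotateProj P u e t *ᵥ (cos t • u + sin t • e) = cos t • u + sin t • e := by
  rw [rotateProj, add_mulVec, sub_vecMulVec_self_mulVec_cos_smul_add_sin_smul hPu hPe hu hue,
    vecMulVec_mulVec, dotProduct_self_cos_smul_add_sin_smul hu he hue, MulOpposite.op_one,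
    one_smul, zero_add]

lemma rotateProj_row_ne_zero [DecidableEq ι] {i : ι} (hPu : P *ᵥ u = u)
    (hPe : P *ᵥ Pi.single i 1 = 0) (hu : u ⬝ᵥ u = 1) (hue : u ⬝ᵥ Pi.single i 1 = 0) {t : ℝ}
    (ht : sin t ≠ 0) :
    rotateProj P u (Pi.single i 1) t i ≠ 0 := by
  have hui : u i = 0 := by simpa using hue
  have he : (Pi.single i 1 : ι → ℝ) ⬝ᵥ Pi.single i 1 = 1 := by simp
  intro hrow
  have := congrFun (rotateProj_mulVec hPu hPe hu he hue t) i
  rw [mulVec, hrow, zero_dotProduct] at this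
  simp [hui] at this
  exact ht this.symm

end Rotation

end Matrix

lemma GrMat.mem_closure_setOf_row_ne_zero {k m : ℕ} (i : Fin m) (P : GrMat (k + 1) m) :
    P ∈ closure {Q : GrMat (k + 1) m | Q.1 i ≠ 0} := by
  obtain ⟨M, hMs, hMM, hMtr⟩ := P
  by_cases hMi : M i ≠ 0
  · exact subset_closure hMi
  rw [not_not] at hMi
  have hM0 : M ≠ 0 := by
    rintro rfl
    exact (Nat.cast_add_one_ne_zero k) (by simpa using hMtr.symm)
  obtain ⟨u, hMu, hu⟩ := exists_mulVec_eq_self_and_dotProduct_self_eq_one hMM hM0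
  set e : Fin m → ℝ := Pi.single i 1
  have hMe : M *ᵥ e = 0 := by
    rw [mulVec_single_one, ← hMs]
    exact hMi
  have he : e ⬝ᵥ e = 1 := by simp [e]
  have hue : u ⬝ᵥ e = 0 := by
    have hui : u i = 0 := by
      rw [← hMu]
      change M i ⬝ᵥ u = 0
      rw [hMi, zero_dotProduct]
    simp [e, hui]
  let γ : ℝ → GrMat (k + 1) m := fun t => ⟨rotateProj M u e t, isSymm_rotateProj hMs t,
    isIdempotentElem_rotateProj hMM hMs hMu hMe hu he hue t,
    (trace_rotateProj hu he hue t).trans hMtr⟩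
  have hγ : Continuous γ := continuous_rotateProj.subtype_mk _
  have hγ0 : γ 0 = ⟨M, hMs, hMM, hMtr⟩ := Subtype.ext rotateProj_zero
  rw [← hγ0]
  refine mem_closure_of_tendsto ((hγ.tendsto 0).mono_left (nhdsWithin_le_nhds (s := Ioi 0))) ?_
  filter_upwards [Ioo_mem_nhdsGT pi_pos] with t ht
  exact rotateProj_row_ne_zero hMu hMe hu hue (sin_pos_of_pos_of_lt_pi ht.1 ht.2).ne'

theorem graff_image_open_dense_general (k n : ℕ) :
    IsOpen {P : GrMat (k + 1) (n + 1) |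
        ¬ LinearMap.range P.1.mulVecLin ≤ coordHyperplane n} ∧
    Dense {P : GrMat (k + 1) (n + 1) |
        ¬ LinearMap.range P.1.mulVecLin ≤ coordHyperplane n} := by
  have hS : {P : GrMat (k + 1) (n + 1) | ¬ LinearMap.range P.1.mulVecLin ≤ coordHyperplane n}
      = {P | P.1 (Fin.last n) ≠ 0} := by
    ext P
    exact (range_mulVecLin_le_ker_proj_iff P.1 (Fin.last n)).not
  rw [hS]
  exact ⟨isOpen_ne_fun ((continuous_apply _).comp continuous_induced_dom) continuous_const,
    GrMat.mem_closure_setOf_row_ne_zero (Fin.last n)⟩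

/-- The image of the embedding `j : Graff(k,n) → Gr(k+1,n+1)` — which, in
the projection-matrix model of `Gr(k+1,n+1)` and by the characterization of the image of
`j`, is the set of `(k+1)`-dimensional subspaces of `ℝⁿ⁺¹` not contained in `E_n` —
is open and dense in `Gr(k+1,n+1)`. -/
theorem graff_image_open_dense (k n : ℕ) (hkn : k < n) :
    IsOpen {P : GrMat (k + 1) (n + 1) |
        ¬ LinearMap.range P.1.mulVecLin ≤ coordHyperplane n} ∧
    Dense {P : GrMat (k + 1) (n + 1) |
        ¬ LinearMap.range P.1.mulVecLin ≤ coordHyperplane n} :=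
  graff_image_open_dense_general k n
end

section
/- The map sending an affine subspace A + b ∈ Graff(k,n) to the pair [P, b₀] ∈ ℝ^{n×n} × ℝ^n, where P is the orthogonal projection onto the linear part A and b₀ is the component of b orthogonal to A, is a bijection from Graff(k,n) onto the set {[P, d] : P^T = P² = P, tr(P) = k, Pd = 0}. -/
/-!
A real symmetric idempotent matrix is the orthogonal projection onto its range, and its trace is
the dimension of that range; so `P ↦ range P` matches the symmetric idempotents of trace `k` with
the `k`-dimensional linear subspaces. An affine subspace `s` with direction `A` through a point `b`
is the solution set of `v - P v = b - P b`, where `P` projects onto `A`; hence `s` is recovered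
from `[P, b - P b]`, and a pair `[P, d]` with `P d = 0` comes from `d + range P`.
-/

open Module Matrix

/-- The Grassmannian of `k`-dimensional affine subspaces of `ℝⁿ`. -/
def Graff (k n : ℕ) : Type :=
  {s : AffineSubspace ℝ (Fin n → ℝ) //
    (s : Set (Fin n → ℝ)).Nonempty ∧ finrank ℝ s.direction = k}

/-- Projection affine coordinates: pairs `[P, d]` with `P` symmetric idempotent of
trace `k` and `P d = 0`. -/
def ProjCoords (k n : ℕ) : Type :=
  {x : Matrix (Fin n) (Fin n) ℝ × (Fin n → ℝ) //
    x.1.transpose = x.1 ∧ x.1 * x.1 = x.1 ∧ x.1.trace = (k : ℝ) ∧ x.1.mulVec x.2 = 0}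

theorem IsStarProjection.eq_of_mul_eq {R : Type*} [Mul R] [StarMul R] {p q : R}
    (hp : IsStarProjection p) (hq : IsStarProjection q) (hqp : q * p = p) (hpq : p * q = q) :
    p = q :=
  calc p = star (q * p) := by rw [hqp, hp.isSelfAdjoint.star_eq]
    _ = p * q := by rw [star_mul, hp.isSelfAdjoint.star_eq, hq.isSelfAdjoint.star_eq]
    _ = q := hpq

namespace Matrix

variable {ι : Type*} [Fintype ι]

theorem isStarProjection_iff_isSymm_and_isIdempotentElem {R : Type*} [CommSemiring R]
    [StarRing R] [TrivialStar R] {P : Matrix ι ι R} :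
    IsStarProjection P ↔ P.IsSymm ∧ IsIdempotentElem P := by
  rw [isStarProjection_iff, IsSelfAdjoint, star_eq_conjTranspose,
    conjTranspose_eq_transpose_of_trivial, and_comm, IsSymm]

variable [DecidableEq ι]

theorem mulVec_eq_self_iff_mem_range {R : Type*} [CommSemiring R] {P : Matrix ι ι R}
    (hP : IsIdempotentElem P) {v : ι → R} : P *ᵥ v = v ↔ v ∈ LinearMap.range (toLin' P) :=
  (LinearMap.IsIdempotentElem.mem_range_iff (hP.map (toLinAlgEquiv' (R := R) (n := ι)))).symm

theorem mul_eq_right_of_range_le {R : Type*} [CommSemiring R] {P Q : Matrix ι ι R}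
    (hQ : IsIdempotentElem Q) (h : LinearMap.range (toLin' P) ≤ LinearMap.range (toLin' Q)) :
    Q * P = P := by
  refine ext_iff_mulVec.mpr fun v => ?_
  rw [← mulVec_mulVec, mulVec_eq_self_iff_mem_range hQ]
  exact h ⟨v, rfl⟩

theorem trace_eq_finrank_range_of_isIdempotentElem {K : Type*} [Field K] {P : Matrix ι ι K}
    (hP : IsIdempotentElem P) : P.trace = finrank K (LinearMap.range (toLin' P)) := by
  have hP' : IsIdempotentElem (toLin' P) := hP.map (toLinAlgEquiv' (R := K) (n := ι))
  rw [← trace_toLin'_eq, (LinearMap.IsIdempotentElem.isProj_range _ hP').trace]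

end Matrix

theorem IsStarProjection.eq_of_range_toLin'_eq {ι R : Type*} [Fintype ι] [DecidableEq ι]
    [CommSemiring R] [StarRing R] {P Q : Matrix ι ι R} (hP : IsStarProjection P)
    (hQ : IsStarProjection Q) (h : LinearMap.range (toLin' P) = LinearMap.range (toLin' Q)) :
    P = Q :=
  hP.eq_of_mul_eq hQ (mul_eq_right_of_range_le hQ.isIdempotentElem h.le)
    (mul_eq_right_of_range_le hP.isIdempotentElem h.ge)

section OrthProjMatrix

variable {ι : Type*} [Fintype ι] [DecidableEq ι]

noncomputable def orthProjMatrix (A : Submodule ℝ (ι → ℝ)) : Matrix ι ι ℝ :=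
  (toEuclideanCLM (𝕜 := ℝ) (n := ι)).symm
    (A.comap (WithLp.linearEquiv 2 ℝ (ι → ℝ)).toLinearMap).starProjection

theorem isStarProjection_orthProjMatrix (A : Submodule ℝ (ι → ℝ)) :
    IsStarProjection (orthProjMatrix A) :=
  isStarProjection_starProjection.map (toEuclideanCLM (𝕜 := ℝ) (n := ι)).symm.toStarAlgHom

theorem range_toLin'_orthProjMatrix (A : Submodule ℝ (ι → ℝ)) :
    LinearMap.range (toLin' (orthProjMatrix A)) = A := by
  set U := A.comap (WithLp.linearEquiv 2 ℝ (ι → ℝ)).toLinearMap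
  have hP : ∀ v, orthProjMatrix A *ᵥ v = (U.starProjection (WithLp.toLp 2 v)).ofLp := fun v => by
    rw [← WithLp.ofLp_toLp 2 v, ← ofLp_toEuclideanCLM, orthProjMatrix,
      StarAlgEquiv.apply_symm_apply]
  apply le_antisymm
  · rintro _ ⟨v, rfl⟩
    rw [toLin'_apply, hP]
    exact U.starProjection_apply_mem _
  · intro v hv
    exact ⟨v, by rw [toLin'_apply, hP, U.starProjection_eq_self_iff.mpr hv]⟩

theorem orthProjMatrix_mulVec_eq_self_iff (A : Submodule ℝ (ι → ℝ)) {v : ι → ℝ} :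
    orthProjMatrix A *ᵥ v = v ↔ v ∈ A := by
  rw [mulVec_eq_self_iff_mem_range (isStarProjection_orthProjMatrix A).isIdempotentElem,
    range_toLin'_orthProjMatrix]

theorem trace_orthProjMatrix (A : Submodule ℝ (ι → ℝ)) :
    (orthProjMatrix A).trace = finrank ℝ A := by
  rw [trace_eq_finrank_range_of_isIdempotentElem
    (isStarProjection_orthProjMatrix A).isIdempotentElem, range_toLin'_orthProjMatrix]

theorem IsStarProjection.orthProjMatrix_range {P : Matrix ι ι ℝ} (hP : IsStarProjection P) :
    orthProjMatrix (LinearMap.range (toLin' P)) = P :=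
  (isStarProjection_orthProjMatrix _).eq_of_range_toLin'_eq hP (range_toLin'_orthProjMatrix _)

end OrthProjMatrix

theorem AffineSubspace.mem_iff_sub_mulVec_eq {ι R : Type*} [Fintype ι] [CommRing R]
    {s : AffineSubspace R (ι → R)} {P : Matrix ι ι R} (hP : ∀ u, P *ᵥ u = u ↔ u ∈ s.direction)
    {b : ι → R} (hb : b ∈ s) (v : ι → R) : v ∈ s ↔ v - P *ᵥ v = b - P *ᵥ b := by
  rw [← vsub_right_mem_direction_iff_mem hb, ← hP, vsub_eq_sub, mulVec_sub]
  constructor <;> intro h <;> linear_combination -h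

namespace Graff

variable {k n : ℕ}

/-- `b - P b` is the component `b₀` of a point `b ∈ s` orthogonal to the direction; by `mem_iff`
it does not depend on the choice of `b`. -/
noncomputable def toProjCoords (s : Graff k n) : ProjCoords k n :=
  let P := orthProjMatrix s.1.direction
  let b := s.2.1.some
  have hP := isStarProjection_iff_isSymm_and_isIdempotentElem.mp
    (isStarProjection_orthProjMatrix s.1.direction)
  ⟨(P, b - P *ᵥ b), hP.1, hP.2, by rw [trace_orthProjMatrix, s.2.2],
    by rw [mulVec_sub, mulVec_mulVec, hP.2.eq, sub_self]⟩

theorem mem_iff (s : Graff k n) (v : Fin n → ℝ) :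
    v ∈ s.1 ↔ v - (toProjCoords s).1.1 *ᵥ v = (toProjCoords s).1.2 :=
  AffineSubspace.mem_iff_sub_mulVec_eq (fun _ => orthProjMatrix_mulVec_eq_self_iff _)
    s.2.1.some_mem v

theorem toProjCoords_injective : Function.Injective (toProjCoords (k := k) (n := n)) :=
  fun s t h => Subtype.ext <| SetLike.ext fun v => by rw [mem_iff, mem_iff, h]

theorem toProjCoords_surjective : Function.Surjective (toProjCoords (k := k) (n := n)) := by
  rintro ⟨⟨P, d⟩, hsymm, hidem, htrace, hPd⟩
  have hP : IsStarProjection P :=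
    isStarProjection_iff_isSymm_and_isIdempotentElem.mpr ⟨hsymm, hidem⟩
  set s := AffineSubspace.mk' d (LinearMap.range (toLin' P))
  have hfinrank : finrank ℝ s.direction = k := by
    rw [AffineSubspace.direction_mk', ← Nat.cast_inj (R := ℝ), ← htrace,
      trace_eq_finrank_range_of_isIdempotentElem hidem]
  set t : Graff k n := ⟨s, ⟨d, AffineSubspace.self_mem_mk' _ _⟩, hfinrank⟩
  have hPt : (toProjCoords t).1.1 = P := by
    change orthProjMatrix s.direction = P
    rw [AffineSubspace.direction_mk', hP.orthProjMatrix_range]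
  refine ⟨t, Subtype.ext (Prod.ext hPt ?_)⟩
  have hd := (mem_iff t d).mp (AffineSubspace.self_mem_mk' _ _)
  rw [hPt, hPd, sub_zero] at hd
  exact hd.symm

end Graff

theorem graff_projCoords_bijection_general (k n : ℕ) :
    ∃ f : Graff k n → ProjCoords k n, Function.Bijective f ∧
      ∀ (s : Graff k n) (v : Fin n → ℝ),
        v ∈ s.1 ↔ v - (f s).1.1.mulVec v = (f s).1.2 :=
  ⟨Graff.toProjCoords, ⟨Graff.toProjCoords_injective, Graff.toProjCoords_surjective⟩,
    Graff.mem_iff⟩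

/-- The map sending an affine subspace `A + b ∈ Graff(k,n)` to the pair
`[P, b₀]`, where `P` is the orthogonal projection onto the direction `A` and `b₀` is the
component of `b` orthogonal to `A`, is a bijection onto
`{[P, d] : Pᵀ = P² = P, tr(P) = k, P d = 0}`.  The map is pinned down by the
characterization `v ∈ A + b ↔ v - P v = b₀` of the affine subspace in terms of its
projection affine coordinates. -/
theorem graff_projCoords_bijection (k n : ℕ) (hkn : k ≤ n) :
    ∃ f : Graff k n → ProjCoords k n, Function.Bijective f ∧
      ∀ (s : Graff k n) (v : Fin n → ℝ),
        v ∈ s.1 ↔ v - (f s).1.1.mulVec v = (f s).1.2 :=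
  graff_projCoords_bijection_general k n
end

section
/- Fix a flag of linear subspaces A₁ ⊆ ... ⊆ A_k in ℝ^n, a linear subspace B with dim(B ∩ A_j) ≥ j for all j, and a vector b ∈ ℝ^n. Then the set C(B,b) = {c ∈ ℝ^n : dim((B + c) ∩ (A_j + b)) ≥ j for all j = 1,...,k} is a convex subset of ℝ^n. -/
/-!
Whenever `(B + c) ∩ (A_j + b)` is nonempty its direction is `B ∩ A_j`, which has dimension
at least `j` by hypothesis; when it is empty its direction is `0`. So the condition at `j` says
exactly that the intersection is nonempty, i.e. `c - b ∈ B + A_j`. Hence `C(B,b)` is the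
intersection of the affine subspaces `b + (B + A_j)`, and is convex.
-/

open Module

namespace AffineSubspace

variable {k V P : Type*} [Ring k] [AddCommGroup V] [Module k V] [AddTorsor V P]

theorem nonempty_of_finrank_direction_ne_zero [Nontrivial k] {s : AffineSubspace k P}
    (h : finrank k s.direction ≠ 0) : (s : Set P).Nonempty := by
  rw [nonempty_iff_ne_bot]
  rintro rfl
  exact h (by rw [direction_bot, finrank_bot])

theorem mk'_inf_mk'_nonempty_iff (p q : P) (B A : Submodule k V) :
    ((mk' p B ⊓ mk' q A : AffineSubspace k P) : Set P).Nonempty ↔ p -ᵥ q ∈ B ⊔ A := by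
  constructor
  · rintro ⟨x, hxB, hxA⟩
    rw [← vsub_sub_vsub_cancel_left p q x, sup_comm]
    exact Submodule.sub_mem_sup ((mem_mk').1 hxA) ((mem_mk').1 hxB)
  · intro h
    obtain ⟨β, hβ, α, hα, hpq⟩ := Submodule.mem_sup.1 h
    refine ⟨-β +ᵥ p, (mem_mk').2 ?_, (mem_mk').2 ?_⟩
    · simpa using B.neg_mem hβ
    · rwa [vadd_vsub_assoc, ← hpq, neg_add_cancel_left]

theorem le_finrank_direction_mk'_inf_mk'_iff [Nontrivial k] {p q : P} {B A : Submodule k V}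
    {d : ℕ} (hd₀ : 0 < d) (hd : d ≤ finrank k ↥(B ⊓ A)) :
    d ≤ finrank k (mk' p B ⊓ mk' q A).direction ↔ p -ᵥ q ∈ B ⊔ A := by
  rw [← mk'_inf_mk'_nonempty_iff]
  constructor
  · exact fun h ↦ nonempty_of_finrank_direction_ne_zero (by omega)
  · rintro ⟨x, hx⟩
    rwa [direction_inf_of_mem_inf hx, direction_mk', direction_mk']

end AffineSubspace

theorem cbb_convex_general (n k : ℕ)
    (A : Fin k → Submodule ℝ (Fin n → ℝ))
    (B : Submodule ℝ (Fin n → ℝ)) (b : Fin n → ℝ)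
    (hB : ∀ j : Fin k, (j : ℕ) + 1 ≤ finrank ℝ ↥(B ⊓ A j)) :
    Convex ℝ {c : Fin n → ℝ | ∀ j : Fin k,
      (j : ℕ) + 1 ≤
        finrank ℝ ↥(AffineSubspace.mk' c B ⊓ AffineSubspace.mk' b (A j)).direction} := by
  have hC : {c : Fin n → ℝ | ∀ j : Fin k, (j : ℕ) + 1 ≤
        finrank ℝ ↥(AffineSubspace.mk' c B ⊓ AffineSubspace.mk' b (A j)).direction} =
      ⋂ j, (AffineSubspace.mk' b (B ⊔ A j) : Set (Fin n → ℝ)) := by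
    ext c
    simp only [Set.mem_ofPred_eq, Set.mem_iInter, SetLike.mem_coe, AffineSubspace.mem_mk']
    exact forall_congr' fun j ↦
      AffineSubspace.le_finrank_direction_mk'_inf_mk'_iff j.val.succ_pos (hB j)
  rw [hC]
  exact convex_iInter fun j ↦ AffineSubspace.convex _

/-- Fix a flag of linear subspaces `A₁ ⊆ ⋯ ⊆ A_k` in `ℝⁿ`, a linear
subspace `B` with `dim(B ∩ A_j) ≥ j` for all `j`, and `b ∈ ℝⁿ`.  Then the set
`C(B,b) = {c : dim((B + c) ∩ (A_j + b)) ≥ j for all j}` is convex.  (The dimension of a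
nonempty intersection of affine subspaces is the dimension of its direction; an empty
intersection has direction `⊥`, of dimension `0 < j`.) -/
theorem cbb_convex (n k : ℕ)
    (A : Fin k → Submodule ℝ (Fin n → ℝ)) (hA : Monotone A)
    (B : Submodule ℝ (Fin n → ℝ)) (b : Fin n → ℝ)
    (hB : ∀ j : Fin k, (j : ℕ) + 1 ≤ finrank ℝ ↥(B ⊓ A j)) :
    Convex ℝ {c : Fin n → ℝ | ∀ j : Fin k,
      (j : ℕ) + 1 ≤
        finrank ℝ ↥(AffineSubspace.mk' c B ⊓ AffineSubspace.mk' b (A j)).direction} :=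
  cbb_convex_general n k A B b hB
end

section
/- If [A, b₀] and [A', b₀'] are two orthogonal affine coordinates of the same affine subspace A + b ∈ Graff(k,n), then the corresponding Stiefel coordinate matrices Y and Y' in V(k+1, n+1) satisfy Y = Y'Q for some Q ∈ O(k+1) of the block form diag(Q', 1) with Q' ∈ O(k). In particular, the Stiefel coordinate matrix of an affine subspace is unique up to right multiplication by such an orthogonal matrix. -/
/-!
Two parametrisations of the same affine subspace have the same direction space, so
`A = A' Q'` for a matrix `Q'`, which is orthogonal because both `A` and `A'` have
orthonormal columns. The offsets differ by a vector of that direction space, yet both are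
orthogonal to it, so `b₀ = b₀'`. Finally, right multiplication by `diag(Q', 1)` acts on
Stiefel coordinates by `A' ↦ A' Q'` and leaves the last column alone.
-/

open Matrix

/-- The affine subspace `{A x + b : x ∈ ℝᵏ}` of `ℝⁿ`. -/
def affSet {n k : ℕ} (A : Matrix (Fin n) (Fin k) ℝ) (b : Fin n → ℝ) : Set (Fin n → ℝ) :=
  Set.range fun x => A.mulVec x + b

/-- The matrix of Stiefel coordinates `[[A, b₀/√(1+‖b₀‖²)], [0, 1/√(1+‖b₀‖²)]]` of an
affine subspace with orthogonal affine coordinates `[A, b₀]`. -/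
noncomputable def stiefelCoords {n k : ℕ} (A : Matrix (Fin n) (Fin k) ℝ)
    (b : Fin n → ℝ) : Matrix (Fin (n + 1)) (Fin (k + 1)) ℝ :=
  fun i j =>
    Fin.lastCases
      (Fin.lastCases (1 / Real.sqrt (1 + ∑ t, b t ^ 2))
        (fun i' => b i' / Real.sqrt (1 + ∑ t, b t ^ 2)) i)
      (fun j' => Fin.lastCases 0 (fun i' => A i' j') i) j

theorem Matrix.exists_eq_mul_of_range_mulVec_subset {R m n p : Type*} [CommSemiring R]
    [Fintype n] [Fintype p] [DecidableEq n]
    {A : Matrix m n R} {B : Matrix m p R} (h : Set.range A.mulVec ⊆ Set.range B.mulVec) :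
    ∃ Z : Matrix p n R, A = B * Z := by
  choose z hz using fun j => h ⟨Pi.single j 1, rfl⟩
  refine ⟨(of z)ᵀ, ?_⟩
  ext i j
  have hij := congrFun (hz j) i
  rw [mulVec_single_one] at hij
  simpa [mul_apply, mulVec, dotProduct] using hij.symm

theorem Matrix.eq_of_sub_mem_range_mulVec {R m n : Type*} [CommRing R] [Fintype m] [Fintype n]
    [DecidableEq n] {A : Matrix m n R} {b b' : m → R} (hA : Aᵀ * A = 1)
    (hb : Aᵀ *ᵥ b = 0) (hb' : Aᵀ *ᵥ b' = 0) (h : b - b' ∈ Set.range A.mulVec) : b = b' := by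
  obtain ⟨x, hx⟩ := h
  have hx0 : x = 0 := by
    rw [← one_mulVec x, ← hA, ← mulVec_mulVec, hx, mulVec_sub, hb, hb', sub_zero]
  rwa [hx0, mulVec_zero, eq_comm, sub_eq_zero] at hx

theorem Matrix.transpose_mul_self_eq_one_of_eq_mul {R m n p : Type*} [CommSemiring R]
    [Fintype m] [Fintype n] [Fintype p] [DecidableEq n] [DecidableEq p]
    {A : Matrix m n R} {B : Matrix m p R} {Z : Matrix p n R}
    (hA : Aᵀ * A = 1) (hB : Bᵀ * B = 1) (hZ : A = B * Z) : Zᵀ * Z = 1 := by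
  rw [← hA, hZ, transpose_mul, Matrix.mul_assoc, ← Matrix.mul_assoc Bᵀ, hB, Matrix.one_mul]

theorem range_mulVec_subset_of_affSet_subset {n k k' : ℕ} {A : Matrix (Fin n) (Fin k) ℝ}
    {A' : Matrix (Fin n) (Fin k') ℝ} {b b' : Fin n → ℝ} (h : affSet A b ⊆ affSet A' b') :
    Set.range A.mulVec ⊆ Set.range A'.mulVec := by
  rintro _ ⟨w, rfl⟩
  obtain ⟨x, hx : A' *ᵥ x + b' = A *ᵥ 0 + b⟩ := h ⟨0, rfl⟩
  obtain ⟨z, hz : A' *ᵥ z + b' = A *ᵥ w + b⟩ := h ⟨w, rfl⟩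
  refine ⟨z - x, ?_⟩
  rw [mulVec_sub, ← add_sub_add_right_eq_sub _ _ b', hz, hx, mulVec_zero, zero_add,
    add_sub_cancel_right]

theorem sub_mem_range_mulVec_of_affSet_subset {n k k' : ℕ} {A : Matrix (Fin n) (Fin k) ℝ}
    {A' : Matrix (Fin n) (Fin k') ℝ} {b b' : Fin n → ℝ} (h : affSet A b ⊆ affSet A' b') :
    b - b' ∈ Set.range A'.mulVec := by
  obtain ⟨x, hx : A' *ᵥ x + b' = A *ᵥ 0 + b⟩ := h ⟨0, rfl⟩
  rw [mulVec_zero, zero_add] at hx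
  exact ⟨x, by rw [← hx, add_sub_cancel_right]⟩

theorem stiefelCoords_mul_reindex_fromBlocks {n m k : ℕ} (A : Matrix (Fin n) (Fin m) ℝ)
    (b : Fin n → ℝ) (Q : Matrix (Fin m) (Fin k) ℝ) :
    stiefelCoords A b * reindex finSumFinEquiv finSumFinEquiv
        (fromBlocks Q 0 0 (1 : Matrix (Fin 1) (Fin 1) ℝ)) = stiefelCoords (A * Q) b := by
  ext i j
  induction j using Fin.lastCases <;> induction i using Fin.lastCases <;>
    simp [stiefelCoords, mul_apply, Fin.sum_univ_castSucc]

/-- If `[A, b₀]` and `[A', b₀']` are two orthogonal affine coordinates of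
the same affine subspace, then the corresponding Stiefel coordinate matrices `Y`, `Y'`
satisfy `Y = Y' Q` for some orthogonal `Q ∈ O(k+1)` of block form `diag(Q', 1)` with
`Q' ∈ O(k)`. -/
theorem stiefelCoords_unique_up_to_orthogonal (n k : ℕ)
    (A A' : Matrix (Fin n) (Fin k) ℝ) (b₀ b₀' : Fin n → ℝ)
    (hA : A.transpose * A = 1) (hA' : A'.transpose * A' = 1)
    (hb : A.transpose.mulVec b₀ = 0) (hb' : A'.transpose.mulVec b₀' = 0)
    (hsame : affSet A b₀ = affSet A' b₀') :
    ∃ Q' : Matrix (Fin k) (Fin k) ℝ, Q'.transpose * Q' = 1 ∧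
      stiefelCoords A b₀ =
        stiefelCoords A' b₀' *
          (Matrix.reindex finSumFinEquiv finSumFinEquiv
            (Matrix.fromBlocks Q' 0 0 (1 : Matrix (Fin 1) (Fin 1) ℝ))) := by
  obtain ⟨Q', hAQ'⟩ :=
    exists_eq_mul_of_range_mulVec_subset (range_mulVec_subset_of_affSet_subset hsame.subset)
  obtain ⟨W, hA'W⟩ :=
    exists_eq_mul_of_range_mulVec_subset (range_mulVec_subset_of_affSet_subset hsame.symm.subset)
  have hA'b : A'ᵀ *ᵥ b₀ = 0 := by
    rw [hA'W, transpose_mul, ← mulVec_mulVec, hb, mulVec_zero]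
  have hbb : b₀ = b₀' :=
    eq_of_sub_mem_range_mulVec hA' hA'b hb' (sub_mem_range_mulVec_of_affSet_subset hsame.subset)
  refine ⟨Q', transpose_mul_self_eq_one_of_eq_mul hA hA' hAQ', ?_⟩
  rw [stiefelCoords_mul_reindex_fromBlocks, ← hAQ', hbb]
end

section
/- The matrix P_{A+b} = [[AA^T + b₀b₀^T/(‖b₀‖²+1), b₀/(‖b₀‖²+1)], [b₀^T/(‖b₀‖²+1), 1/(‖b₀‖²+1)]] ∈ ℝ^{(n+1)×(n+1)} is a symmetric idempotent (orthogonal projection) matrix of rank k+1, for any A ∈ ℝ^{n×k} with A^T A = I and b₀ ∈ ℝ^n with A^T b₀ = 0; moreover the assignment A + b ↦ P_{A+b} is well defined and injective on Graff(k,n). -/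
open Matrix

/-- The matrix of projection coordinates
`P_{A+b} = [[A Aᵀ + b₀b₀ᵀ/(‖b₀‖²+1), b₀/(‖b₀‖²+1)], [b₀ᵀ/(‖b₀‖²+1), 1/(‖b₀‖²+1)]]`
of an affine subspace with orthogonal affine coordinates `[A, b₀]`. -/
noncomputable def projCoordsMat {n k : ℕ} (A : Matrix (Fin n) (Fin k) ℝ)
    (b : Fin n → ℝ) : Matrix (Fin (n + 1)) (Fin (n + 1)) ℝ :=
  fun i j =>
    Fin.lastCases
      (Fin.lastCases (1 / (∑ t, b t ^ 2 + 1)) (fun i' => b i' / (∑ t, b t ^ 2 + 1)) i)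
      (fun j' =>
        Fin.lastCases (b j' / (∑ t, b t ^ 2 + 1))
          (fun i' => (A * A.transpose) i' j' + b i' * b j' / (∑ t, b t ^ 2 + 1)) i) j

/-
Write `s = ‖b₀‖² + 1` and `B = [[A, b₀/√s], [0, 1/√s]]`. Then `P_{A+b} = B Bᵀ`, and the columns of
`B` are orthonormal precisely because `AᵀA = 1` and `Aᵀb₀ = 0`; so `P_{A+b}` is the orthogonal
projection onto the `(k+1)`-dimensional column space of `B`. For the second part, the last row of
`P_{A+b}` recovers `s` and then `b₀`, and the remaining block recovers `A Aᵀ`, the orthogonal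
projection onto the column space of `A`. Conversely `b₀` is the point of `A + b` nearest to the
origin (two such displacements differ by a vector orthogonal to both), so the affine subspace
determines `b₀` and then the column space of `A`.
-/

namespace Matrix

section OrthonormalColumns

variable {m l R : Type*} [Fintype m] [Fintype l]

theorem mulVec_dotProduct_eq_zero [CommSemiring R] {A : Matrix m l R} {b : m → R}
    (hb : Aᵀ *ᵥ b = 0) (x : l → R) : A *ᵥ x ⬝ᵥ b = 0 := by
  rw [dotProduct_comm, dotProduct_mulVec, ← mulVec_transpose, hb, zero_dotProduct]

variable [DecidableEq l]

theorem isIdempotentElem_mul_transpose [CommSemiring R] {B : Matrix m l R} (hB : Bᵀ * B = 1) :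
    IsIdempotentElem (B * Bᵀ) := by
  rw [IsIdempotentElem, Matrix.mul_assoc, ← Matrix.mul_assoc Bᵀ, hB, Matrix.one_mul]

theorem rank_mul_transpose_of_transpose_mul_eq_one [CommSemiring R] [StrongRankCondition R]
    {B : Matrix m l R} (hB : Bᵀ * B = 1) : (B * Bᵀ).rank = Fintype.card l := by
  refine le_antisymm ((rank_mul_le_left _ _).trans B.rank_le_card_width) ?_
  calc Fintype.card l = (Bᵀ * B * (Bᵀ * B)).rank := by rw [hB, Matrix.one_mul, rank_one]
    _ = (Bᵀ * (B * Bᵀ) * B).rank := by simp only [Matrix.mul_assoc]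
    _ ≤ (B * Bᵀ).rank := (rank_mul_le_left _ _).trans (rank_mul_le_right _ _)

theorem mul_transpose_mul_of_range_subset [CommSemiring R] {n : Type*} [Fintype n]
    {B : Matrix m l R} (hB : Bᵀ * B = 1) {C : Matrix m n R}
    (hC : Set.range C.mulVec ⊆ Set.range B.mulVec) : B * Bᵀ * C = C := by
  refine mulVec_injective (funext fun x => ?_)
  obtain ⟨y, hy⟩ := hC ⟨x, rfl⟩
  rw [← mulVec_mulVec, ← hy, mulVec_mulVec, Matrix.mul_assoc, hB, Matrix.mul_one]

theorem eq_of_mul_eq_of_transpose_eq [CommSemiring R] {P Q : Matrix m m R}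
    (hP : Pᵀ = P) (hQ : Qᵀ = Q) (hQP : Q * P = P) (hPQ : P * Q = Q) : P = Q := by
  rw [← hP, ← hQP, transpose_mul, hP, hQ, hPQ]

theorem mul_transpose_eq_mul_transpose_iff [CommRing R] {A A' : Matrix m l R}
    (hA : Aᵀ * A = 1) (hA' : A'ᵀ * A' = 1) :
    A * Aᵀ = A' * A'ᵀ ↔ Set.range A.mulVec = Set.range A'.mulVec := by
  constructor
  · intro h
    have range_subset {A A' : Matrix m l R} (hA : Aᵀ * A = 1) (h : A * Aᵀ = A' * A'ᵀ) :
        Set.range A.mulVec ⊆ Set.range A'.mulVec := by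
      rintro _ ⟨x, rfl⟩
      refine ⟨A'ᵀ *ᵥ (A *ᵥ x), ?_⟩
      rw [mulVec_mulVec, mulVec_mulVec, ← h, Matrix.mul_assoc, hA, Matrix.mul_one]
    exact (range_subset hA h).antisymm (range_subset hA' h.symm)
  · intro h
    have transpose_mul_transpose_self (A : Matrix m l R) : (A * Aᵀ)ᵀ = A * Aᵀ := by
      rw [transpose_mul, transpose_transpose]
    refine eq_of_mul_eq_of_transpose_eq (transpose_mul_transpose_self A)
      (transpose_mul_transpose_self A') ?_ ?_
    · rw [← Matrix.mul_assoc, mul_transpose_mul_of_range_subset hA' h.subset]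
    · rw [← Matrix.mul_assoc, mul_transpose_mul_of_range_subset hA h.symm.subset]

end OrthonormalColumns

end Matrix

section AffSet

variable {n k : ℕ} {A A' : Matrix (Fin n) (Fin k) ℝ} {b b' : Fin n → ℝ}

theorem affSet_eq_image (A : Matrix (Fin n) (Fin k) ℝ) (b : Fin n → ℝ) :
    affSet A b = (· + b) '' Set.range A.mulVec := by
  rw [affSet, ← Set.range_comp]
  rfl

theorem mem_affSet_self (A : Matrix (Fin n) (Fin k) ℝ) (b : Fin n → ℝ) : b ∈ affSet A b :=
  ⟨0, by simp⟩

theorem eq_of_mem_affSet_of_mem_affSet (hb : Aᵀ *ᵥ b = 0) (hb' : A'ᵀ *ᵥ b' = 0)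
    (h : b ∈ affSet A' b') (h' : b' ∈ affSet A b) : b = b' := by
  obtain ⟨x, hx : A' *ᵥ x + b' = b⟩ := h
  obtain ⟨x', hx' : A *ᵥ x' + b = b'⟩ := h'
  have orth_b : (b - b') ⬝ᵥ b = 0 := by
    rw [← hx', sub_add_cancel_right, neg_dotProduct, mulVec_dotProduct_eq_zero hb, neg_zero]
  have orth_b' : (b - b') ⬝ᵥ b' = 0 := by
    rw [← hx, add_sub_cancel_right, mulVec_dotProduct_eq_zero hb']
  rw [← sub_eq_zero, ← dotProduct_self_eq_zero, dotProduct_sub, orth_b, orth_b', sub_zero]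

theorem affSet_eq_affSet_iff (hb : Aᵀ *ᵥ b = 0) (hb' : A'ᵀ *ᵥ b' = 0) :
    affSet A b = affSet A' b' ↔ b = b' ∧ Set.range A.mulVec = Set.range A'.mulVec := by
  constructor
  · intro h
    obtain rfl : b = b' := eq_of_mem_affSet_of_mem_affSet hb hb'
      (h ▸ mem_affSet_self A b) (h.symm ▸ mem_affSet_self A' b')
    refine ⟨rfl, (Set.image_injective.2 (add_left_injective b)) ?_⟩
    rwa [affSet_eq_image, affSet_eq_image] at h
  · rintro ⟨rfl, h⟩
    rw [affSet_eq_image, affSet_eq_image, h]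

end AffSet

section ProjCoords

variable {n k : ℕ}

/-- The factor `B = [[A, b/√s], [0, 1/√s]]`, `s = ‖b‖² + 1`, of `P_{A+b} = B Bᵀ`. -/
noncomputable def projCoordsFactor (A : Matrix (Fin n) (Fin k) ℝ) (b : Fin n → ℝ) :
    Matrix (Fin (n + 1)) (Fin (k + 1)) ℝ :=
  of fun i j =>
    Fin.lastCases
      (Fin.lastCases (1 / √(∑ t, b t ^ 2 + 1)) (fun i' => b i' / √(∑ t, b t ^ 2 + 1)) i)
      (fun j' => Fin.lastCases 0 (fun i' => A i' j') i) j

theorem projCoordsMat_eq_mul_transpose (A : Matrix (Fin n) (Fin k) ℝ) (b : Fin n → ℝ) :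
    projCoordsMat A b = projCoordsFactor A b * (projCoordsFactor A b)ᵀ := by
  have hs : √(∑ t, b t ^ 2 + 1) ^ 2 = ∑ t, b t ^ 2 + 1 := Real.sq_sqrt (by positivity)
  ext i j
  induction i using Fin.lastCases <;> induction j using Fin.lastCases <;>
    simp [projCoordsMat, projCoordsFactor, mul_apply, Fin.sum_univ_castSucc] <;>
    field_simp <;> simp [hs]

theorem transpose_mul_projCoordsFactor {A : Matrix (Fin n) (Fin k) ℝ} {b : Fin n → ℝ}
    (hA : Aᵀ * A = 1) (hb : Aᵀ *ᵥ b = 0) :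
    (projCoordsFactor A b)ᵀ * projCoordsFactor A b = 1 := by
  have hs : √(∑ t, b t ^ 2 + 1) ^ 2 = ∑ t, b t ^ 2 + 1 := Real.sq_sqrt (by positivity)
  have hA_apply (i j : Fin k) : ∑ x, A x i * A x j = (1 : Matrix (Fin k) (Fin k) ℝ) i j := by
    rw [← hA, mul_apply]; rfl
  have hb_apply (i : Fin k) : ∑ x, A x i * b x = 0 := congrFun hb i
  ext i j
  induction i using Fin.lastCases <;> induction j using Fin.lastCases <;>
    simp [projCoordsFactor, mul_apply, Fin.sum_univ_castSucc, one_apply, hA_apply,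
      div_mul_eq_mul_div, mul_div_assoc', ← Finset.sum_div, mul_comm (b _) (A _ _), hb_apply,
      ← sq, div_pow, hs, (Fin.castSucc_ne_last _).symm]
  field_simp

theorem projCoordsMat_eq_projCoordsMat_iff {A A' : Matrix (Fin n) (Fin k) ℝ} {b b' : Fin n → ℝ} :
    projCoordsMat A b = projCoordsMat A' b' ↔ b = b' ∧ A * Aᵀ = A' * A'ᵀ := by
  constructor
  · intro h
    have entry (i j : Fin (n + 1)) := congrFun (congrFun h i) j
    have hs : ∑ t, b t ^ 2 + 1 = ∑ t, b' t ^ 2 + 1 := by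
      simpa [projCoordsMat] using entry (Fin.last n) (Fin.last n)
    obtain rfl : b = b' := funext fun i => by
      have hs_ne : ∑ t, b t ^ 2 + 1 ≠ 0 := by positivity
      simpa [projCoordsMat, ← hs, hs_ne] using entry i.castSucc (Fin.last n)
    exact ⟨rfl, ext fun i j => by simpa [projCoordsMat] using entry i.castSucc j.castSucc⟩
  · rintro ⟨rfl, hA⟩
    ext i j
    simp only [projCoordsMat, hA]

end ProjCoords

/-- For any `A` with orthonormal columns and `b₀` orthogonal to them, the
matrix `P_{A+b}` is a symmetric idempotent (orthogonal projection) of rank `k+1`;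
moreover the assignment `A + b ↦ P_{A+b}` is well defined and injective on `Graff(k,n)`:
two orthogonal affine coordinates give the same matrix iff they define the same affine
subspace. -/
theorem projCoords_orthogonal_projection (n k : ℕ) :
    (∀ (A : Matrix (Fin n) (Fin k) ℝ) (b₀ : Fin n → ℝ),
      A.transpose * A = 1 → A.transpose.mulVec b₀ = 0 →
        (projCoordsMat A b₀).transpose = projCoordsMat A b₀ ∧
        projCoordsMat A b₀ * projCoordsMat A b₀ = projCoordsMat A b₀ ∧
        (projCoordsMat A b₀).rank = k + 1) ∧
    (∀ (A A' : Matrix (Fin n) (Fin k) ℝ) (b₀ b₀' : Fin n → ℝ),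
      A.transpose * A = 1 → A'.transpose * A' = 1 →
      A.transpose.mulVec b₀ = 0 → A'.transpose.mulVec b₀' = 0 →
        (affSet A b₀ = affSet A' b₀' ↔ projCoordsMat A b₀ = projCoordsMat A' b₀')) := by
  refine ⟨fun A b hA hb => ?_, fun A A' b b' hA hA' hb hb' => ?_⟩
  · have hB := transpose_mul_projCoordsFactor hA hb
    rw [projCoordsMat_eq_mul_transpose]
    exact ⟨by rw [transpose_mul, transpose_transpose], (isIdempotentElem_mul_transpose hB).eq,
      by rw [rank_mul_transpose_of_transpose_mul_eq_one hB, Fintype.card_fin]⟩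
  · rw [affSet_eq_affSet_iff hb hb', projCoordsMat_eq_projCoordsMat_iff,
      mul_transpose_eq_mul_transpose_iff hA hA']
end
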